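/- arXiv:2310.12888 — 6 statements merged into one kernel-verified Lean document; each statement's English description precedes it below -/
import Mathlib

section
/- Let F be a field, let 1 ≤ k ≤ n, and let V ∈ F^{k×n} be an MDS matrix, i.e. every k columns of V are linearly independent. Fix ℓ ≥ 2. For σ ∈ {0,…,k} let R_{≤σ} ⊆ F^n denote the span of the first σ rows of V, and for A ⊆ {1,…,n} let E_A ⊆ F^n denote the span of the standard basis vectors indexed by A. Assume that for every σ_1,…,σ_ℓ ∈ {0,…,k} and A_1,…,A_ℓ ⊆ {1,…,n} with σ_i + |A_i| ≤ n for all i, the dimension of ⋂_{i=1}^ℓ (R_{≤σ_i} + E_{A_i}) equals gid_n((σ_i,A_i)_i) (i.e. the pair (Vᵀ, I_n) is MDSb(ℓ)). Then every dual matrix Q ∈ F^{(n−k)×n} of V (rank n−k with V · Qᵀ = 0) satisfies: for every family A_1,…,A_ℓ of subsets of {1,…,n} with |A_i| ≤ n−k, with |A_1| + ⋯ + |A_ℓ| = (ℓ−1)·(n−k), and having the dimension-(n−k) null intersection property, the intersection Q_{A_1} ∩ ⋯ ∩ Q_{A_ℓ} of the column-span subspaces is zero. -/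
open Finset Matrix

noncomputable section

/-- The intersection `⋂_{j ∈ p} A j`, as a `Finset (Fin n)`. -/
def interSet {ℓ n : ℕ} (A : Fin ℓ → Finset (Fin n)) (p : Finset (Fin ℓ)) : Finset (Fin n) :=
  Finset.univ.filter fun x => ∀ j ∈ p, x ∈ A j

/-- The dimension-`m` null intersection property: for every partition of `{1,…,ℓ}`
(presented as a `Finpartition` of `Finset.univ : Finset (Fin ℓ)`) into nonempty parts
`P_1,…,P_s`, we have `Σ_i |⋂_{j ∈ P_i} A_j| ≤ (s-1)·m`. -/
def NullInter {ℓ n : ℕ} (m : ℕ) (A : Fin ℓ → Finset (Fin n)) : Prop :=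
  ∀ P : Finpartition (Finset.univ : Finset (Fin ℓ)),
    ∑ p ∈ P.parts, (interSet A p).card ≤ (P.parts.card - 1) * m

/-- Span of the columns of `M` indexed by `A`. -/
def colSpan {K : Type*} [Field K] {k n : ℕ} (M : Matrix (Fin k) (Fin n) K)
    (A : Finset (Fin n)) : Submodule K (Fin k → K) :=
  Submodule.span K ((fun j i => M i j) '' (A : Set (Fin n)))

/-- Span of the first `σ` columns of `M`. -/
def colSpanLT {K : Type*} [Field K] {k b : ℕ} (M : Matrix (Fin k) (Fin b) K)
    (σ : ℕ) : Submodule K (Fin k → K) :=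
  Submodule.span K ((fun j i => M i j) '' {j : Fin b | (j : ℕ) < σ})

/-- The minimum of `σ` over the set `p` (for nonempty `p`, this is `min_{j ∈ p} σ j`). -/
def partMin {ℓ : ℕ} (σ : Fin ℓ → ℕ) (p : Finset (Fin ℓ)) : ℕ :=
  sInf (σ '' (p : Set (Fin ℓ)))

/-- The generic intersection dimension `gid_m((σ_i, A_i)_i)`: the maximum over all
partitions of `{1,…,ℓ}` into nonempty parts `P_1,…,P_s` of
`-m(s-1) + Σ_i (min_{j ∈ P_i} σ_j + |⋂_{j ∈ P_i} A_j|)`. -/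
def gid {ℓ n : ℕ} (m : ℕ) (σ : Fin ℓ → ℕ) (A : Fin ℓ → Finset (Fin n)) : ℤ :=
  sSup { v : ℤ | ∃ P : Finpartition (Finset.univ : Finset (Fin ℓ)),
    v = -(m : ℤ) * ((P.parts.card : ℤ) - 1)
      + ∑ p ∈ P.parts, ((partMin σ p : ℤ) + ((interSet A p).card : ℤ)) }

/-- `V` is MDS: every `k` columns of `V` are linearly independent. -/
def IsMDS {F : Type*} [Field F] {k n : ℕ} (V : Matrix (Fin k) (Fin n) F) : Prop :=
  ∀ S : Finset (Fin n), S.card = k →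
    LinearIndependent F (fun j : S => fun i => V i (j : Fin n))

/-!
Multiplication by `Q` is a surjection `F^n → F^(n-k)` whose kernel is the row space `R_{≤k}` of
`V` (`V` has rank `k`, `Q` has rank `n - k` and `V Qᵀ = 0`). The preimage of `Q_{A_i}` is therefore
`R_{≤k} + E_{A_i}`, so the preimage of `⋂ Q_{A_i}` is `⋂ (R_{≤k} + E_{A_i})`, which by `MDSb(ℓ)`
with all `σ_i = k` has dimension `gid_n((k, A_i)_i) = k`: the null intersection property bounds the value
of every partition by `k`, and the discrete partition attains `k` because `Σ |A_i| = (ℓ-1)(n-k)`.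
Since the preimage also has dimension `k + dim ⋂ Q_{A_i}`, the intersection is zero.
-/

section Gid

variable {ℓ n : ℕ}

def gidTerm (m : ℕ) (σ : Fin ℓ → ℕ) (A : Fin ℓ → Finset (Fin n))
    (P : Finpartition (univ : Finset (Fin ℓ))) : ℤ :=
  -(m : ℤ) * ((#P.parts : ℤ) - 1) + ∑ p ∈ P.parts, ((partMin σ p : ℤ) + (#(interSet A p) : ℤ))

lemma gid_eq_of_isGreatest {m : ℕ} {σ : Fin ℓ → ℕ} {A : Fin ℓ → Finset (Fin n)} {c : ℤ}
    (h : IsGreatest (Set.range (gidTerm m σ A)) c) : gid m σ A = c := by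
  unfold gid
  convert h.csSup_eq using 2
  ext v
  simp [gidTerm, eq_comm]

lemma interSet_singleton (A : Fin ℓ → Finset (Fin n)) (i : Fin ℓ) :
    interSet A {i} = A i := by
  ext x; simp [interSet]

lemma partMin_const (c : ℕ) {p : Finset (Fin ℓ)} (hp : p.Nonempty) :
    partMin (fun _ => c) p = c := by
  rw [partMin, Set.Nonempty.image_const (coe_nonempty.2 hp), csInf_singleton]

lemma gidTerm_const (m k : ℕ) (A : Fin ℓ → Finset (Fin n))
    (P : Finpartition (univ : Finset (Fin ℓ))) :
    gidTerm m (fun _ => k) A P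
      = k - ((#P.parts : ℤ) - 1) * (m - k) + ∑ p ∈ P.parts, (#(interSet A p) : ℤ) := by
  rw [gidTerm, sum_add_distrib,
    sum_congr rfl fun p hp => by rw [partMin_const k (P.nonempty_of_mem_parts hp)],
    sum_const, nsmul_eq_mul]
  ring

lemma gidTerm_const_le {m k : ℕ} [NeZero ℓ] {A : Fin ℓ → Finset (Fin n)} (hkm : k ≤ m)
    (hA : NullInter (m - k) A) (P : Finpartition (univ : Finset (Fin ℓ))) :
    gidTerm m (fun _ => k) A P ≤ k := by
  have hP : 1 ≤ #P.parts := card_pos.2 (P.parts_nonempty univ_nonempty.ne_empty)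
  have := hA P
  zify [hP, hkm] at this
  rw [gidTerm_const]
  linarith

lemma gidTerm_const_bot (m k : ℕ) (A : Fin ℓ → Finset (Fin n)) :
    gidTerm m (fun _ => k) A ⊥ = k - ((ℓ : ℤ) - 1) * (m - k) + ∑ i, (#(A i) : ℤ) := by
  rw [gidTerm_const, Finpartition.card_bot, card_univ, Fintype.card_fin, Finpartition.parts_bot,
    sum_map]
  simp only [Function.Embedding.coeFn_mk, interSet_singleton]

lemma gid_const_eq {m k : ℕ} [NeZero ℓ] {A : Fin ℓ → Finset (Fin n)} (hkm : k ≤ m)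
    (hA : NullInter (m - k) A) (hsum : ∑ i, #(A i) = (ℓ - 1) * (m - k)) :
    gid m (fun _ => k) A = k := by
  refine gid_eq_of_isGreatest ⟨⟨⊥, ?_⟩, ?_⟩
  · have hℓ : 1 ≤ ℓ := NeZero.one_le
    zify [hℓ, hkm] at hsum
    rw [gidTerm_const_bot, hsum]
    ring
  · rintro _ ⟨P, rfl⟩
    exact gidTerm_const_le hkm hA P

end Gid

section ColumnSpaces

variable {K : Type*} [Field K]

lemma IsMDS.rank_eq {k n : ℕ} {V : Matrix (Fin k) (Fin n) K} (hV : IsMDS V) (hkn : k ≤ n) :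
    V.rank = k := by
  refine le_antisymm V.rank_le_height ?_
  let S := univ.map (Fin.castLEEmb hkn)
  have hS : #S = k := by simp [S]
  rw [rank_eq_finrank_span_cols]
  calc k = Module.finrank K (Submodule.span K (Set.range fun j : S => fun i => V i j)) := by
        rw [finrank_span_eq_card (hV S hS), Fintype.card_coe, hS]
    _ ≤ _ := Submodule.finrank_mono (Submodule.span_mono (by rintro _ ⟨j, rfl⟩; exact ⟨j, rfl⟩))

lemma colSpanLT_eq_range {k b σ : ℕ} (M : Matrix (Fin k) (Fin b) K) (h : b ≤ σ) :
    colSpanLT M σ = LinearMap.range M.mulVecLin := by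
  have huniv : {j : Fin b | (j : ℕ) < σ} = Set.univ :=
    Set.eq_univ_of_forall fun j => j.isLt.trans_le h
  rw [range_mulVecLin, colSpanLT, huniv, Set.image_univ]
  rfl

lemma ker_mulVecLin_eq_range_transpose {m p n : Type*} [Fintype p] [Fintype n]
    {Q : Matrix m n K} {V : Matrix p n K} (hVQ : V * Qᵀ = 0)
    (hrank : V.rank + Q.rank = Fintype.card n) :
    LinearMap.ker Q.mulVecLin = LinearMap.range Vᵀ.mulVecLin := by
  have hle : LinearMap.range Vᵀ.mulVecLin ≤ LinearMap.ker Q.mulVecLin := by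
    rintro _ ⟨c, rfl⟩
    rw [LinearMap.mem_ker, mulVecLin_apply, mulVecLin_apply, mulVec_mulVec, ← transpose_transpose Q,
      ← transpose_mul, hVQ, transpose_zero, zero_mulVec]
  refine (Submodule.eq_of_le_of_finrank_eq hle ?_).symm
  have hQ := Q.mulVecLin.finrank_range_add_finrank_ker
  rw [Module.finrank_fintype_fun_eq_card] at hQ
  change Vᵀ.rank = _
  rw [rank_transpose]
  change _ + Module.finrank K (LinearMap.range Q.mulVecLin) = _ at hrank
  omega

lemma map_mulVecLin_colSpan_one {m n : ℕ} (Q : Matrix (Fin m) (Fin n) K) (A : Finset (Fin n)) :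
    (colSpan (1 : Matrix (Fin n) (Fin n) K) A).map Q.mulVecLin = colSpan Q A := by
  rw [colSpan, colSpan, Submodule.map_span, ← Set.image_comp]
  congr 1
  refine Set.image_congr fun j _ => ?_
  ext i
  simp [mulVec, dotProduct, one_apply]

lemma comap_mulVecLin_colSpan {m n : ℕ} (Q : Matrix (Fin m) (Fin n) K) (A : Finset (Fin n)) :
    (colSpan Q A).comap Q.mulVecLin
      = colSpan (1 : Matrix (Fin n) (Fin n) K) A ⊔ LinearMap.ker Q.mulVecLin := by
  rw [← map_mulVecLin_colSpan_one, Submodule.comap_map_eq]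

lemma finrank_comap_of_surjective {M N : Type*} [AddCommGroup M] [Module K M] [AddCommGroup N]
    [Module K N] [FiniteDimensional K M] {f : M →ₗ[K] N} (hf : Function.Surjective f)
    (W : Submodule K N) :
    Module.finrank K (W.comap f) = Module.finrank K (LinearMap.ker f) + Module.finrank K W := by
  have hrn := (f.domRestrict (W.comap f)).finrank_range_add_finrank_ker
  rw [LinearMap.range_domRestrict, Submodule.map_comap_eq_of_surjective hf,
    LinearMap.ker_domRestrict,
    (Submodule.comapSubtypeEquivOfLe (LinearMap.ker_le_comap f)).finrank_eq] at hrn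
  omega

end ColumnSpaces

theorem MDSb_transpose_implies_dual_MDS_general
    (F : Type*) [Field F] (k n : ℕ) (hkn : k ≤ n)
    (V : Matrix (Fin k) (Fin n) F) (hMDS : IsMDS V)
    (ℓ : ℕ) (hℓ : 2 ≤ ℓ)
    (hMDSb : ∀ (σ : Fin ℓ → ℕ) (A : Fin ℓ → Finset (Fin n)),
      (∀ i, σ i ≤ k) → (∀ i, σ i + (A i).card ≤ n) →
      (Module.finrank F
        ↥(⨅ i, colSpanLT Vᵀ (σ i) ⊔
            colSpan (1 : Matrix (Fin n) (Fin n) F) (A i)) : ℤ) = gid n σ A) :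
    ∀ Q : Matrix (Fin (n - k)) (Fin n) F, Q.rank = n - k → V * Qᵀ = 0 →
      ∀ A : Fin ℓ → Finset (Fin n),
        (∀ i, (A i).card ≤ n - k) →
        (∑ i, (A i).card) = (ℓ - 1) * (n - k) →
        NullInter (n - k) A →
        (⨅ i, colSpan Q (A i)) = ⊥ := by
  intro Q hQ hVQ A hcard hsum hNI
  have : NeZero ℓ := ⟨by omega⟩
  have hker : LinearMap.ker Q.mulVecLin = colSpanLT Vᵀ k := by
    rw [colSpanLT_eq_range _ le_rfl]
    exact ker_mulVecLin_eq_range_transpose hVQ (by simp [hMDS.rank_eq hkn, hQ]; omega)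
  have hsurj : Function.Surjective Q.mulVecLin := by
    rw [← LinearMap.range_eq_top]
    exact Submodule.eq_top_of_finrank_eq (by rw [Module.finrank_fin_fun]; exact hQ)
  have hdimker : Module.finrank F (LinearMap.ker Q.mulVecLin) = k := by
    have := Q.mulVecLin.finrank_range_add_finrank_ker
    change Q.rank + _ = _ at this
    rw [Module.finrank_fin_fun] at this
    omega
  have hcomap : (⨅ i, colSpan Q (A i)).comap Q.mulVecLin
      = ⨅ i, colSpanLT Vᵀ k ⊔ colSpan (1 : Matrix (Fin n) (Fin n) F) (A i) := by
    simp_rw [Submodule.comap_iInf, comap_mulVecLin_colSpan, hker, sup_comm]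
  have hdim := hMDSb (fun _ => k) A (fun _ => le_rfl) fun i => by have := hcard i; omega
  rw [gid_const_eq hkn hNI hsum, ← hcomap, finrank_comap_of_surjective hsurj, hdimker] at hdim
  exact Submodule.finrank_eq_zero.1 (by omega)

/-- If `V` is MDS and `(Vᵀ, I_n)` is `MDSb(ℓ)`, then every dual matrix `Q` of `V`
is `MDS(ℓ)`; that is, `V` is `LD-MDS(≤ ℓ-1)`. -/
theorem MDSb_transpose_implies_dual_MDS
    (F : Type*) [Field F] (k n : ℕ) (hk : 1 ≤ k) (hkn : k ≤ n)
    (V : Matrix (Fin k) (Fin n) F) (hMDS : IsMDS V)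
    (ℓ : ℕ) (hℓ : 2 ≤ ℓ)
    (hMDSb : ∀ (σ : Fin ℓ → ℕ) (A : Fin ℓ → Finset (Fin n)),
      (∀ i, σ i ≤ k) → (∀ i, σ i + (A i).card ≤ n) →
      (Module.finrank F
        ↥(⨅ i, colSpanLT Vᵀ (σ i) ⊔
            colSpan (1 : Matrix (Fin n) (Fin n) F) (A i)) : ℤ) = gid n σ A) :
    ∀ Q : Matrix (Fin (n - k)) (Fin n) F, Q.rank = n - k → V * Qᵀ = 0 →
      ∀ A : Fin ℓ → Finset (Fin n),
        (∀ i, (A i).card ≤ n - k) →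
        (∑ i, (A i).card) = (ℓ - 1) * (n - k) →
        NullInter (n - k) A →
        (⨅ i, colSpan Q (A i)) = ⊥ :=
  MDSb_transpose_implies_dual_MDS_general F k n hkn V hMDS ℓ hℓ hMDSb
end
end

section
/- Let ℓ, k, n ≥ 1, let σ_1,…,σ_ℓ ∈ ℕ and A_1,…,A_ℓ ⊆ {1,…,n} with σ_i + |A_i| ≤ k for all i. Then the following are equivalent: (b) for every partition of {1,…,ℓ} into nonempty parts P_1,…,P_s, Σ_{i=1}^s (min_{j∈P_i} σ_j + |⋂_{j∈P_i} A_j|) ≤ (s−1)·k; (c) there exist δ_1,…,δ_ℓ ∈ ℕ with δ_1 + ⋯ + δ_ℓ = k such that for every nonempty J ⊆ {1,…,ℓ}, min_{j∈J} σ_j + |⋂_{j∈J} A_j| + Σ_{j∈J} δ_j ≤ k. -/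
open Finset Matrix

noncomputable section

def fval {ℓ n : ℕ} (σ : Fin ℓ → ℕ) (A : Fin ℓ → Finset (Fin n)) (J : Finset (Fin ℓ)) : ℕ :=
  partMin σ J + (interSet A J).card

lemma partMin_le {ℓ : ℕ} (σ : Fin ℓ → ℕ) {J : Finset (Fin ℓ)} {j : Fin ℓ} (hj : j ∈ J) :
    partMin σ J ≤ σ j :=
  Nat.sInf_le ⟨j, by simpa using hj, rfl⟩

lemma partMin_exists {ℓ : ℕ} (σ : Fin ℓ → ℕ) {J : Finset (Fin ℓ)} (hJ : J.Nonempty) :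
    ∃ j ∈ J, σ j = partMin σ J := by
  have hne : (σ '' (J : Set (Fin ℓ))).Nonempty := by
    obtain ⟨j, hj⟩ := hJ
    exact ⟨σ j, ⟨j, by simpa using hj, rfl⟩⟩
  obtain ⟨j, hj, hje⟩ := Nat.sInf_mem hne
  exact ⟨j, by simpa using hj, hje⟩

lemma interSet_subset {ℓ n : ℕ} (A : Fin ℓ → Finset (Fin n)) {J : Finset (Fin ℓ)} {j : Fin ℓ}
    (hj : j ∈ J) : interSet A J ⊆ A j := by
  intro x hx
  simp only [interSet, mem_filter] at hx
  exact hx.2 j hj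

lemma fval_le {ℓ n : ℕ} (σ : Fin ℓ → ℕ) (A : Fin ℓ → Finset (Fin n)) {J : Finset (Fin ℓ)}
    {j : Fin ℓ} (hj : j ∈ J) : fval σ A J ≤ σ j + (A j).card :=
  add_le_add (partMin_le σ hj) (card_le_card (interSet_subset A hj))

lemma interSet_union {ℓ n : ℕ} (A : Fin ℓ → Finset (Fin n)) (X Y : Finset (Fin ℓ)) :
    interSet A (X ∪ Y) = interSet A X ∩ interSet A Y := by
  ext x
  simp only [interSet, mem_filter, mem_inter, mem_union, mem_univ, true_and]
  constructor
  · intro h; exact ⟨fun j hj => h j (Or.inl hj), fun j hj => h j (Or.inr hj)⟩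
  · rintro ⟨h1, h2⟩ j (hj | hj)
    · exact h1 j hj
    · exact h2 j hj

lemma interSet_inter_supset {ℓ n : ℕ} (A : Fin ℓ → Finset (Fin n)) (X Y : Finset (Fin ℓ)) :
    interSet A X ∪ interSet A Y ⊆ interSet A (X ∩ Y) := by
  intro x hx
  simp only [interSet, mem_filter, mem_union, mem_univ, true_and, mem_inter] at *
  rcases hx with h | h
  · exact fun j hj => h j hj.1
  · exact fun j hj => h j hj.2

lemma partMin_anti {ℓ : ℕ} (σ : Fin ℓ → ℕ) {X Y : Finset (Fin ℓ)} (hXY : X ⊆ Y)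
    (hX : X.Nonempty) : partMin σ Y ≤ partMin σ X := by
  obtain ⟨j, hj, hje⟩ := partMin_exists σ hX
  exact hje ▸ partMin_le σ (hXY hj)

lemma fval_supermod {ℓ n : ℕ} (σ : Fin ℓ → ℕ) (A : Fin ℓ → Finset (Fin n))
    {X Y : Finset (Fin ℓ)} (hXY : (X ∩ Y).Nonempty) :
    fval σ A X + fval σ A Y ≤ fval σ A (X ∪ Y) + fval σ A (X ∩ Y) := by
  have hX : X.Nonempty := hXY.mono inter_subset_left
  have hY : Y.Nonempty := hXY.mono inter_subset_right
  have hmin : partMin σ X + partMin σ Y ≤ partMin σ (X ∪ Y) + partMin σ (X ∩ Y) := by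
    obtain ⟨j0, hj0, hj0e⟩ := partMin_exists σ (hX.mono subset_union_left)
    rcases mem_union.mp hj0 with h | h
    · have h1 : partMin σ X ≤ partMin σ (X ∪ Y) := hj0e ▸ partMin_le σ h
      have h2 : partMin σ Y ≤ partMin σ (X ∩ Y) := partMin_anti σ inter_subset_right hXY
      omega
    · have h1 : partMin σ Y ≤ partMin σ (X ∪ Y) := hj0e ▸ partMin_le σ h
      have h2 : partMin σ X ≤ partMin σ (X ∩ Y) := partMin_anti σ inter_subset_left hXY
      omega
  have hcard : (interSet A X).card + (interSet A Y).card
      ≤ (interSet A (X ∪ Y)).card + (interSet A (X ∩ Y)).card := by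
    have h1 := Finset.card_inter_add_card_union (interSet A X) (interSet A Y)
    have h2 := Finset.card_le_card (interSet_inter_supset A X Y)
    rw [interSet_union]
    omega
  simp only [fval]
  omega
def candSet {ℓ n : ℕ} (k : ℕ) (σ : Fin ℓ → ℕ) (A : Fin ℓ → Finset (Fin n))
    (i : Fin ℓ) (d : ℕ → ℕ) : Finset ℕ :=
  (Finset.univ.powerset.filter fun J => i ∈ J).image
    fun J => k - fval σ A J - ∑ j ∈ J.filter (fun j : Fin ℓ => (j : ℕ) < (i : ℕ)), d (j : ℕ)

lemma candSet_nonempty {ℓ n : ℕ} (k : ℕ) (σ : Fin ℓ → ℕ) (A : Fin ℓ → Finset (Fin n))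
    (i : Fin ℓ) (d : ℕ → ℕ) : (candSet k σ A i d).Nonempty :=
  Finset.Nonempty.image ⟨{i}, by simp⟩ _

def stepVal {ℓ n : ℕ} (k : ℕ) (σ : Fin ℓ → ℕ) (A : Fin ℓ → Finset (Fin n))
    (t : ℕ) (d : ℕ → ℕ) : ℕ :=
  if h : t < ℓ then (candSet k σ A ⟨t, h⟩ d).min' (candSet_nonempty k σ A ⟨t, h⟩ d) else 0

def ds {ℓ n : ℕ} (k : ℕ) (σ : Fin ℓ → ℕ) (A : Fin ℓ → Finset (Fin n)) : ℕ → ℕ → ℕ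
  | 0 => fun _ => 0
  | t + 1 => fun j => if j = t then stepVal k σ A t (ds k σ A t) else ds k σ A t j

/-- The greedy dual variables. -/
def δg {ℓ n : ℕ} (k : ℕ) (σ : Fin ℓ → ℕ) (A : Fin ℓ → Finset (Fin n)) (i : Fin ℓ) : ℕ :=
  ds k σ A ℓ (i : ℕ)

lemma ds_stable {ℓ n : ℕ} (k : ℕ) (σ : Fin ℓ → ℕ) (A : Fin ℓ → Finset (Fin n)) :
    ∀ t' t j, j < t → t ≤ t' → ds k σ A t' j = ds k σ A t j := by
  intro t'
  induction t' with
  | zero => intro t j hj ht; omega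
  | succ t' ih =>
    intro t j hj ht
    rcases Nat.eq_or_lt_of_le ht with h | h
    · rw [h]
    · have ht' : t ≤ t' := by omega
      have hjt' : j ≠ t' := by omega
      show (if j = t' then _ else ds k σ A t' j) = _
      rw [if_neg hjt', ih t j hj ht']

lemma δg_eq_ds {ℓ n : ℕ} (k : ℕ) (σ : Fin ℓ → ℕ) (A : Fin ℓ → Finset (Fin n))
    {t : ℕ} {j : Fin ℓ} (hj : (j : ℕ) < t) (ht : t ≤ ℓ) :
    ds k σ A t (j : ℕ) = δg k σ A j := by
  rw [δg, ds_stable k σ A ℓ t j hj ht]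

lemma δg_def {ℓ n : ℕ} (k : ℕ) (σ : Fin ℓ → ℕ) (A : Fin ℓ → Finset (Fin n)) (i : Fin ℓ) :
    δg k σ A i = (candSet k σ A i (ds k σ A (i : ℕ))).min'
      (candSet_nonempty k σ A i (ds k σ A (i : ℕ))) := by
  have h1 : δg k σ A i = ds k σ A ((i : ℕ) + 1) (i : ℕ) := by
    rw [δg, ds_stable k σ A ℓ ((i : ℕ) + 1) i (by omega) i.isLt]
  rw [h1]
  show (if (i : ℕ) = (i : ℕ) then stepVal k σ A (i : ℕ) (ds k σ A (i : ℕ)) else _) = _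
  rw [if_pos rfl, stepVal, dif_pos i.isLt]

/-- Rewriting the inner sums of candidate values in terms of the final `δg`. -/
lemma sum_ds_eq {ℓ n : ℕ} (k : ℕ) (σ : Fin ℓ → ℕ) (A : Fin ℓ → Finset (Fin n))
    {t : ℕ} (ht : t ≤ ℓ) (J : Finset (Fin ℓ)) :
    ∑ j ∈ J.filter (fun j : Fin ℓ => (j : ℕ) < t), ds k σ A t (j : ℕ)
      = ∑ j ∈ J.filter (fun j : Fin ℓ => (j : ℕ) < t), δg k σ A j := by
  refine Finset.sum_congr rfl fun j hj => ?_
  simp only [mem_filter] at hj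
  exact δg_eq_ds k σ A hj.2 ht
lemma sum_filter_succ {ℓ : ℕ} {J : Finset (Fin ℓ)} {t : ℕ} {i : Fin ℓ} (hi : (i : ℕ) = t)
    (hiJ : i ∈ J) (δ : Fin ℓ → ℕ) :
    ∑ j ∈ J.filter (fun j : Fin ℓ => (j : ℕ) < t + 1), δ j
      = ∑ j ∈ J.filter (fun j : Fin ℓ => (j : ℕ) < t), δ j + δ i := by
  have hins : J.filter (fun j : Fin ℓ => (j : ℕ) < t + 1)
      = insert i (J.filter fun j : Fin ℓ => (j : ℕ) < t) := by
    ext j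
    simp only [mem_filter, mem_insert]
    constructor
    · rintro ⟨hjJ, hlt⟩
      by_cases h : (j : ℕ) = t
      · exact Or.inl (Fin.ext (by omega))
      · exact Or.inr ⟨hjJ, by omega⟩
    · rintro (rfl | ⟨hjJ, h⟩)
      · exact ⟨hiJ, by omega⟩
      · exact ⟨hjJ, by omega⟩
  rw [hins, sum_insert (by simp [hi]), add_comm]

lemma feas {ℓ n : ℕ} (k : ℕ) (σ : Fin ℓ → ℕ) (A : Fin ℓ → Finset (Fin n))
    (hproper : ∀ i, σ i + (A i).card ≤ k) :
    ∀ t (J : Finset (Fin ℓ)), J.Nonempty →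
      fval σ A J + ∑ j ∈ J.filter (fun j : Fin ℓ => (j : ℕ) < t), δg k σ A j ≤ k := by
  intro t
  induction t with
  | zero =>
    intro J hJ
    obtain ⟨j, hj⟩ := hJ
    have : J.filter (fun j : Fin ℓ => (j : ℕ) < 0) = ∅ := by simp
    rw [this, sum_empty, add_zero]
    exact (fval_le σ A hj).trans (hproper j)
  | succ t ih =>
    intro J hJ
    by_cases hlt : t < ℓ
    · set i : Fin ℓ := ⟨t, hlt⟩ with hidef
      by_cases hiJ : i ∈ J
      · rw [sum_filter_succ (i := i) (t := t) rfl hiJ]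
        have hcand : (k - fval σ A J
              - ∑ j ∈ J.filter (fun j : Fin ℓ => (j : ℕ) < (i : ℕ)), ds k σ A (i : ℕ) (j : ℕ))
            ∈ candSet k σ A i (ds k σ A (i : ℕ)) :=
          mem_image_of_mem _ (by simp [hiJ])
        have hle := Finset.min'_le _ _ hcand
        rw [← δg_def k σ A i] at hle
        have hit : (i : ℕ) = t := rfl
        rw [hit, sum_ds_eq k σ A hlt.le J] at hle
        have hIH := ih J hJ
        omega
      · have hcg : ∀ j ∈ J, ((j : ℕ) < t + 1 ↔ (j : ℕ) < t) := by
          intro j hj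
          constructor
          · intro h
            by_cases he : (j : ℕ) = t
            · exact absurd (Fin.ext (a := j) (b := i) he ▸ hj) hiJ
            · omega
          · omega
        rw [filter_congr hcg]
        exact ih J hJ
    · have hcg : ∀ j ∈ J, ((j : ℕ) < t + 1 ↔ (j : ℕ) < t) := by
        intro j hj
        have := j.isLt
        omega
      rw [filter_congr hcg]
      exact ih J hJ

lemma feas_full {ℓ n : ℕ} (k : ℕ) (σ : Fin ℓ → ℕ) (A : Fin ℓ → Finset (Fin n))
    (hproper : ∀ i, σ i + (A i).card ≤ k) (J : Finset (Fin ℓ)) (hJ : J.Nonempty) :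
    fval σ A J + ∑ j ∈ J, δg k σ A j ≤ k := by
  have h := feas k σ A hproper ℓ J hJ
  rwa [Finset.filter_true_of_mem (fun j _ => j.isLt)] at h
lemma exists_tight {ℓ n : ℕ} (k : ℕ) (σ : Fin ℓ → ℕ) (A : Fin ℓ → Finset (Fin n))
    (hproper : ∀ i, σ i + (A i).card ≤ k) (i : Fin ℓ) :
    ∃ T : Finset (Fin ℓ), i ∈ T ∧ fval σ A T + ∑ j ∈ T, δg k σ A j = k := by
  have hmin := δg_def k σ A i
  have hmem := Finset.min'_mem (candSet k σ A i (ds k σ A (i : ℕ)))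
    (candSet_nonempty k σ A i (ds k σ A (i : ℕ)))
  rw [← hmin] at hmem
  simp only [candSet, mem_image, mem_filter, mem_powerset] at hmem
  obtain ⟨T, ⟨-, hiT⟩, hTval⟩ := hmem
  refine ⟨T, hiT, ?_⟩
  rw [sum_ds_eq k σ A i.isLt.le T] at hTval
  have h1 := feas k σ A hproper (i : ℕ) T ⟨i, hiT⟩
  have h2 := feas k σ A hproper ((i : ℕ) + 1) T ⟨i, hiT⟩
  rw [sum_filter_succ (i := i) (t := (i : ℕ)) rfl hiT] at h2
  have h3 := feas_full k σ A hproper T ⟨i, hiT⟩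
  have h4 : ∑ j ∈ T.filter (fun j : Fin ℓ => (j : ℕ) < (i : ℕ) + 1), δg k σ A j
      ≤ ∑ j ∈ T, δg k σ A j := Finset.sum_le_sum_of_subset (Finset.filter_subset _ _)
  rw [sum_filter_succ (i := i) (t := (i : ℕ)) rfl hiT] at h4
  omega

lemma tight_union {ℓ n : ℕ} (k : ℕ) (σ : Fin ℓ → ℕ) (A : Fin ℓ → Finset (Fin n))
    (hproper : ∀ i, σ i + (A i).card ≤ k) {X Y : Finset (Fin ℓ)}
    (hX : fval σ A X + ∑ j ∈ X, δg k σ A j = k)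
    (hY : fval σ A Y + ∑ j ∈ Y, δg k σ A j = k)
    (hXY : (X ∩ Y).Nonempty) :
    fval σ A (X ∪ Y) + ∑ j ∈ X ∪ Y, δg k σ A j = k := by
  have h1 := feas_full k σ A hproper (X ∪ Y) ((hXY.mono inter_subset_left).mono subset_union_left)
  have h2 := feas_full k σ A hproper (X ∩ Y) hXY
  have h3 : (∑ j ∈ X ∪ Y, δg k σ A j) + ∑ j ∈ X ∩ Y, δg k σ A j
      = (∑ j ∈ X, δg k σ A j) + ∑ j ∈ Y, δg k σ A j := Finset.sum_union_inter
  have h4 := fval_supermod σ A hXY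
  omega

/-- The union of all tight sets containing `i`. -/
def Mset {ℓ n : ℕ} (k : ℕ) (σ : Fin ℓ → ℕ) (A : Fin ℓ → Finset (Fin n)) (i : Fin ℓ) :
    Finset (Fin ℓ) :=
  (Finset.univ.powerset.filter fun T : Finset (Fin ℓ) =>
    i ∈ T ∧ fval σ A T + ∑ j ∈ T, δg k σ A j = k).sup id

lemma sup_tight {ℓ n : ℕ} (k : ℕ) (σ : Fin ℓ → ℕ) (A : Fin ℓ → Finset (Fin n))
    (hproper : ∀ i, σ i + (A i).card ≤ k) (i : Fin ℓ) :
    ∀ F : Finset (Finset (Fin ℓ)),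
      (∀ T ∈ F, i ∈ T ∧ fval σ A T + ∑ j ∈ T, δg k σ A j = k) → F.Nonempty →
      i ∈ F.sup id ∧ fval σ A (F.sup id) + ∑ j ∈ F.sup id, δg k σ A j = k := by
  intro F
  induction F using Finset.induction_on with
  | empty => intro _ h; exact absurd h (by simp)
  | @insert T F hT ih =>
    intro hmem _
    obtain ⟨hi1, ht1⟩ := hmem T (mem_insert_self _ _)
    by_cases hF : F.Nonempty
    · obtain ⟨hi2, ht2⟩ := ih (fun T' hT' => hmem T' (mem_insert_of_mem hT')) hF
      rw [Finset.sup_insert, Finset.sup_eq_union]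
      refine ⟨Finset.mem_union_left _ hi1, ?_⟩
      exact tight_union k σ A hproper ht1 ht2 ⟨i, Finset.mem_inter.mpr ⟨hi1, hi2⟩⟩
    · rw [Finset.not_nonempty_iff_eq_empty] at hF
      subst hF
      simp only [Finset.sup_insert, Finset.sup_empty, id_eq, sup_bot_eq]
      exact ⟨hi1, ht1⟩

lemma Mset_spec {ℓ n : ℕ} (k : ℕ) (σ : Fin ℓ → ℕ) (A : Fin ℓ → Finset (Fin n))
    (hproper : ∀ i, σ i + (A i).card ≤ k) (i : Fin ℓ) :
    i ∈ Mset k σ A i ∧ fval σ A (Mset k σ A i) + ∑ j ∈ Mset k σ A i, δg k σ A j = k := by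
  apply sup_tight k σ A hproper i
  · intro T hT
    exact (Finset.mem_filter.mp hT).2
  · obtain ⟨T, hiT, htight⟩ := exists_tight k σ A hproper i
    exact ⟨T, Finset.mem_filter.mpr ⟨Finset.mem_powerset.mpr (Finset.subset_univ T), hiT, htight⟩⟩

lemma subset_Mset {ℓ n : ℕ} (k : ℕ) (σ : Fin ℓ → ℕ) (A : Fin ℓ → Finset (Fin n))
    {i : Fin ℓ} {T : Finset (Fin ℓ)} (hiT : i ∈ T)
    (htight : fval σ A T + ∑ j ∈ T, δg k σ A j = k) : T ⊆ Mset k σ A i :=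
  Finset.le_sup (f := id)
    (Finset.mem_filter.mpr ⟨Finset.mem_powerset.mpr (Finset.subset_univ T), hiT, htight⟩)

set_option maxHeartbeats 2000000 in
lemma Mset_eq {ℓ n : ℕ} (k : ℕ) (σ : Fin ℓ → ℕ) (A : Fin ℓ → Finset (Fin n))
    (hproper : ∀ i, σ i + (A i).card ≤ k) {i x : Fin ℓ} (hx : x ∈ Mset k σ A i) :
    Mset k σ A x = Mset k σ A i := by
  obtain ⟨hxi, hti⟩ := Mset_spec k σ A hproper i
  obtain ⟨hxx, htx⟩ := Mset_spec k σ A hproper x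
  apply Finset.Subset.antisymm
  · -- Mset x ∪ Mset i is tight, contains i, hence ⊆ Mset i; so Mset x ⊆ Mset i
    have hu := tight_union k σ A hproper htx hti ⟨x, Finset.mem_inter.mpr ⟨hxx, hx⟩⟩
    have hiu : i ∈ Mset k σ A x ∪ Mset k σ A i := Finset.mem_union_right _ hxi
    intro y hy
    exact subset_Mset k σ A hiu hu (Finset.mem_union_left _ hy)
  · exact subset_Mset k σ A hx hti
set_option maxHeartbeats 2000000 in
/-- The partition of `univ` into the maximal tight sets. -/
def tightPart {ℓ n : ℕ} (k : ℕ) (σ : Fin ℓ → ℕ) (A : Fin ℓ → Finset (Fin n))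
    (hproper : ∀ i, σ i + (A i).card ≤ k) :
    Finpartition (Finset.univ : Finset (Fin ℓ)) where
  parts := Finset.univ.image (fun i => Mset k σ A i)
  supIndep := by
    rw [Finset.supIndep_iff_pairwiseDisjoint]
    intro a ha b hb hab
    simp only [Finset.coe_image, Set.mem_image, Finset.mem_coe, Finset.mem_univ, true_and,
      Set.mem_setOf_eq, Finset.coe_univ, Set.image_univ, Set.mem_range] at ha hb
    obtain ⟨i, rfl⟩ := ha
    obtain ⟨j, rfl⟩ := hb
    rw [Function.onFun, Finset.disjoint_left]
    intro x hxa hxb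
    exact hab ((Mset_eq k σ A hproper hxa) ▸ (Mset_eq k σ A hproper hxb))
  sup_parts := by
    apply le_antisymm le_top
    intro x _
    rw [Finset.mem_sup]
    exact ⟨Mset k σ A x, Finset.mem_image_of_mem _ (Finset.mem_univ x),
      (Mset_spec k σ A hproper x).1⟩
  bot_notMem := by
    intro h
    obtain ⟨i, -, hM⟩ := Finset.mem_image.mp h
    have := (Mset_spec k σ A hproper i).1
    rw [hM] at this
    exact absurd this (Finset.notMem_empty _)

lemma part_sum {ℓ : ℕ} (P : Finpartition (Finset.univ : Finset (Fin ℓ))) (g : Fin ℓ → ℕ) :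
    ∑ p ∈ P.parts, ∑ j ∈ p, g j = ∑ j, g j := by
  have hd : (↑P.parts : Set (Finset (Fin ℓ))).PairwiseDisjoint id :=
    P.supIndep.pairwiseDisjoint
  calc ∑ p ∈ P.parts, ∑ j ∈ p, g j = ∑ j ∈ P.parts.biUnion id, g j :=
        (Finset.sum_biUnion hd).symm
    _ = ∑ j, g j := by rw [← Finset.sup_eq_biUnion, P.sup_parts]


/-- Duality for null configurations: the partition bound (b) holds iff there exist
dual variables `δ_i` summing to `k` witnessing the Hall-type condition (c). -/
theorem partition_bound_iff_dual_variables
    (ℓ k n : ℕ) (hℓ : 1 ≤ ℓ) (hk : 1 ≤ k) (hn : 1 ≤ n)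
    (σ : Fin ℓ → ℕ) (A : Fin ℓ → Finset (Fin n))
    (hproper : ∀ i, σ i + (A i).card ≤ k) :
    (∀ P : Finpartition (Finset.univ : Finset (Fin ℓ)),
        ∑ p ∈ P.parts, (partMin σ p + (interSet A p).card) ≤ (P.parts.card - 1) * k)
    ↔ (∃ δ : Fin ℓ → ℕ, (∑ i, δ i) = k ∧
        ∀ J : Finset (Fin ℓ), J.Nonempty →
          partMin σ J + (interSet A J).card + ∑ j ∈ J, δ j ≤ k) := by
  haveI : Nonempty (Fin ℓ) := ⟨⟨0, hℓ⟩⟩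
  have huniv : (Finset.univ : Finset (Fin ℓ)).Nonempty := Finset.univ_nonempty
  constructor
  · intro hb
    refine ⟨δg k σ A, ?_, ?_⟩
    · have hle : fval σ A Finset.univ + ∑ i, δg k σ A i ≤ k :=
        feas_full k σ A hproper Finset.univ huniv
      set P := tightPart k σ A hproper with hP
      have htight : ∀ p ∈ P.parts, fval σ A p + ∑ j ∈ p, δg k σ A j = k := by
        intro p hp
        obtain ⟨i, -, rfl⟩ := Finset.mem_image.mp hp
        exact (Mset_spec k σ A hproper i).2
      have h2 : (∑ p ∈ P.parts, fval σ A p) + ∑ p ∈ P.parts, ∑ j ∈ p, δg k σ A j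
          = P.parts.card * k := by
        rw [← Finset.sum_add_distrib, Finset.sum_congr rfl htight, Finset.sum_const,
          smul_eq_mul]
      have h3 : ∑ p ∈ P.parts, ∑ j ∈ p, δg k σ A j = ∑ j, δg k σ A j := part_sum P _
      have h4 : ∑ p ∈ P.parts, fval σ A p ≤ (P.parts.card - 1) * k := hb P
      have h5 : 1 ≤ P.parts.card :=
        Finset.card_pos.mpr (P.parts_nonempty huniv.ne_empty)
      have h6 : (P.parts.card - 1) * k + k = P.parts.card * k := by
        have hc : P.parts.card - 1 + 1 = P.parts.card := Nat.succ_pred_eq_of_pos h5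
        calc (P.parts.card - 1) * k + k = (P.parts.card - 1 + 1) * k := by ring
          _ = P.parts.card * k := by rw [hc]
      omega
    · intro J hJ
      exact feas_full k σ A hproper J hJ
  · rintro ⟨δ, hsum, hcon⟩ P
    have h2 : (∑ p ∈ P.parts, (partMin σ p + (interSet A p).card))
        + ∑ p ∈ P.parts, ∑ j ∈ p, δ j ≤ P.parts.card * k := by
      rw [← Finset.sum_add_distrib]
      calc ∑ p ∈ P.parts, (partMin σ p + (interSet A p).card + ∑ j ∈ p, δ j)
          ≤ ∑ _p ∈ P.parts, k :=
            Finset.sum_le_sum fun p hp => hcon p (P.nonempty_of_mem_parts hp)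
        _ = P.parts.card * k := by rw [Finset.sum_const, smul_eq_mul]
    have h3 : ∑ p ∈ P.parts, ∑ j ∈ p, δ j = k := by rw [part_sum P δ, hsum]
    have h5 : 1 ≤ P.parts.card :=
      Finset.card_pos.mpr (P.parts_nonempty huniv.ne_empty)
    have h6 : (P.parts.card - 1) * k + k = P.parts.card * k := by
      have hc : P.parts.card - 1 + 1 = P.parts.card := Nat.succ_pred_eq_of_pos h5
      calc (P.parts.card - 1) * k + k = (P.parts.card - 1 + 1) * k := by ring
        _ = P.parts.card * k := by rw [hc]
    omega
end
end

section
/- Let F be a field, let k ≥ 1, let e : Fin k → ℤ be strictly monotone (integers e_1 < e_2 < ⋯ < e_k), let K := FractionField (MvPolynomial (Fin k) F), and let α_j ∈ K be the image of the variable X_j for j = 1,…,k. Then the generalized Vandermonde matrix M ∈ K^{k×k} with entries M_{i,j} := α_j^{e_i} (integer powers of the nonzero elements α_j) has nonzero determinant. -/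
open Finset Matrix

noncomputable section

/-!
Since the exponents are bounded below by some `c`, factoring `α_j ^ c` out of column `j` leaves
the matrix `(α_j ^ d_i)` with `d_i = e_i - c ∈ ℕ` pairwise distinct. Its determinant is the image
of the polynomial `∑_σ sign σ · ∏_i X_i ^ d_{σ i}`, whose terms are distinct monomials because `d`
is injective; in particular the coefficient of `∏_i X_i ^ d_i` is `1`.
-/

namespace MvPolynomial

variable {n R : Type*} [Fintype n] [CommRing R]

theorem prod_X_pow_eq_monomial_equivFunOnFinite (d : n → ℕ) :
    ∏ i, (X i : MvPolynomial n R) ^ d i = monomial (Finsupp.equivFunOnFinite.symm d) 1 := by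
  rw [monomial_eq, C_1, one_mul, Finsupp.prod_fintype _ _ fun _ => pow_zero _]
  rfl

variable [DecidableEq n]

theorem coeff_det_X_pow {d : n → ℕ} (hd : Function.Injective d) :
    coeff (Finsupp.equivFunOnFinite.symm d)
      (of fun i j => (X j : MvPolynomial n R) ^ d i).det = 1 := by
  rw [det_apply, coeff_sum, Finset.sum_eq_single 1]
  · simp [prod_X_pow_eq_monomial_equivFunOnFinite]
  · intro σ _ hσ
    have hne : Finsupp.equivFunOnFinite.symm (fun i => d (σ i)) ≠
        Finsupp.equivFunOnFinite.symm d := fun h =>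
      hσ <| Equiv.ext fun i => hd (congrFun (Finsupp.equivFunOnFinite.symm.injective h) i)
    simp only [of_apply]
    rw [prod_X_pow_eq_monomial_equivFunOnFinite fun i => d (σ i), Units.smul_def, coeff_smul,
      coeff_monomial, if_neg hne, smul_zero]
  · simp

theorem det_X_pow_ne_zero [Nontrivial R] {d : n → ℕ} (hd : Function.Injective d) :
    (of fun i j => (X j : MvPolynomial n R) ^ d i).det ≠ 0 := fun h => by
  simpa [h] using coeff_det_X_pow (R := R) hd

end MvPolynomial

theorem Matrix.det_of_zpow_add_natCast {n K : Type*} [Fintype n] [DecidableEq n] [Field K]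
    {α : n → K} (hα : ∀ j, α j ≠ 0) (c : ℤ) (d : n → ℕ) :
    (of fun i j => α j ^ (c + d i)).det = (∏ j, α j ^ c) * (of fun i j => α j ^ d i).det := by
  rw [← det_mul_row]
  congr 1
  ext i j
  simp [zpow_add₀ (hα j)]

theorem Matrix.det_of_X_zpow_ne_zero {n R : Type*} [Fintype n] [DecidableEq n] [CommRing R]
    [Nontrivial R] (K : Type*) [Field K] [Algebra (MvPolynomial n R) K]
    [IsFractionRing (MvPolynomial n R) K] {e : n → ℤ} (he : Function.Injective e) :
    (of fun i j => algebraMap (MvPolynomial n R) K (MvPolynomial.X j) ^ e i).det ≠ 0 := by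
  set α : n → K := fun j => algebraMap (MvPolynomial n R) K (MvPolynomial.X j)
  have hinj := IsFractionRing.injective (MvPolynomial n R) K
  have hα : ∀ j, α j ≠ 0 := fun j => (map_ne_zero_iff _ hinj).2 (MvPolynomial.X_ne_zero j)
  obtain ⟨c, hc⟩ := (Set.finite_range e).bddBelow
  set d : n → ℕ := fun i => (e i - c).toNat
  have hed : ∀ i, e i = c + d i := fun i => by
    have := hc (Set.mem_range_self i)
    simp only [d]
    omega
  have hd : Function.Injective d := fun i i' h => he (by rw [hed i, hed i', h])
  have hmap : (of fun i j => α j ^ d i) =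
      (of fun i j => (MvPolynomial.X j : MvPolynomial n R) ^ d i).map (algebraMap _ K) := by
    ext i j
    simp [α]
  simp_rw [hed]
  rw [det_of_zpow_add_natCast hα, hmap, ← RingHom.mapMatrix_apply, ← RingHom.map_det]
  exact mul_ne_zero (prod_ne_zero_iff.2 fun j _ => zpow_ne_zero _ (hα j))
    ((map_ne_zero_iff _ hinj).2 (MvPolynomial.det_X_pow_ne_zero hd))

theorem generalized_vandermonde_det_ne_zero_general
    (F : Type*) [Field F] (k : ℕ) (e : Fin k → ℤ) (he : StrictMono e) :
    (Matrix.of fun i j : Fin k =>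
      (algebraMap (MvPolynomial (Fin k) F) (FractionRing (MvPolynomial (Fin k) F))
        (MvPolynomial.X j)) ^ (e i)).det ≠ 0 :=
  Matrix.det_of_X_zpow_ne_zero _ he.injective

/-- The generalized Vandermonde determinant with generic entries and strictly
increasing integer exponents is nonzero. -/
theorem generalized_vandermonde_det_ne_zero
    (F : Type*) [Field F] (k : ℕ) (hk : 1 ≤ k) (e : Fin k → ℤ) (he : StrictMono e) :
    (Matrix.of fun i j : Fin k =>
      (algebraMap (MvPolynomial (Fin k) F) (FractionRing (MvPolynomial (Fin k) F))
        (MvPolynomial.X j)) ^ (e i)).det ≠ 0 :=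
  generalized_vandermonde_det_ne_zero_general F k e he
end
end

section
/- Let F be a field, let k, r ≥ 1, and let f_1, …, f_k ∈ F[x_1,…,x_r] (MvPolynomial (Fin r) F) be linearly independent over F. Let K := FractionField (MvPolynomial (Fin k × Fin r) F) and for j = 1,…,k let α_j ∈ K^r be the tuple whose t-th coordinate is the image of the variable X_{(j,t)}. Then the k×k matrix M with entries M_{i,j} := f_i(α_j) (evaluation via the algebra map into K) has nonzero determinant. (In other words, a generic polynomial code with linearly independent defining polynomials is MDS.) -/
/-!
Linear independence of the `f_i` means that some `k` monomials give a nonsingular `k × k` minor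
of their coefficient matrix. That minor stays nonsingular after extending scalars to an infinite
field `L ⊇ F`, so the `f_i` remain independent over `L`; over an infinite field a polynomial is
determined by its values, so they are even independent as functions `L^r → L`, and there are
points `β_1, …, β_k ∈ L^r` with `det (f_i(β_j)) ≠ 0`. Specialising the generic points `α_j` to
`β_j` then shows that `det (f_i(α_j))` is a nonzero polynomial.
-/

open Finset Matrix

noncomputable section

section EvaluationMatrix

variable {ι S L : Type*} [Fintype ι] [DecidableEq ι] [Field L] {v : ι → S → L}

theorem span_range_eval_eq_top_of_linearIndependent (hv : LinearIndependent L v) :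
    Submodule.span L (Set.range fun s i => v i s) = ⊤ := by
  by_contra hspan
  obtain ⟨φ, hφ, hφspan⟩ := Submodule.exists_dual_map_eq_bot_of_lt_top
    (lt_top_iff_ne_top.mpr hspan) inferInstance
  have hφeval (s : S) : φ (fun i => v i s) = 0 := by
    rw [← Submodule.mem_bot L, ← hφspan]
    exact Submodule.mem_map_of_mem (Submodule.subset_span ⟨s, rfl⟩)
  -- the coordinates `c i = φ (Pi.single i 1)` of `φ` give the relation `∑ i, c i • v i = 0`
  let c := LinearEquiv.piRing L L ι L φ
  have hc : ∀ i, c i = 0 := Fintype.linearIndependent_iff.mp hv c <| funext fun s => by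
    have hφs := hφeval s
    rw [← (LinearEquiv.piRing L L ι L).symm_apply_apply φ,
      LinearEquiv.piRing_symm_apply] at hφs
    simpa [c, mul_comm] using hφs
  exact hφ ((LinearEquiv.piRing L L ι L).map_eq_zero_iff.mp (funext hc))

theorem exists_det_ne_zero_of_linearIndependent (hv : LinearIndependent L v) :
    ∃ s : ι → S, (Matrix.of fun i j => v i (s j)).det ≠ 0 := by
  have hspan := (span_range_eval_eq_top_of_linearIndependent hv).ge
  let b := Module.Basis.ofSpan hspan
  let e := (Pi.basisFun L ι).indexEquiv b
  choose s hs using fun j => Module.Basis.ofSpan_subset hspan ⟨e j, rfl⟩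
  refine ⟨s, ?_⟩
  have hcols : (Matrix.of fun i j => v i (s j)).col = b ∘ e := funext hs
  replace hcols : LinearIndependent L (Matrix.of fun i j => v i (s j)).col :=
    hcols ▸ b.linearIndependent.comp e e.injective
  exact (Matrix.isUnit_iff_isUnit_det _).mp (Matrix.linearIndependent_cols_iff_isUnit.mp hcols)
    |>.ne_zero

theorem linearIndependent_of_det_ne_zero (s : ι → S)
    (hs : (Matrix.of fun i j => v i (s j)).det ≠ 0) : LinearIndependent L v :=
  LinearIndependent.of_comp (LinearMap.funLeft L L s)
    (Matrix.linearIndependent_rows_of_det_ne_zero hs)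

end EvaluationMatrix

namespace MvPolynomial

variable {ι σ : Type*}

theorem linearIndependent_coeff_iff {R : Type*} [CommRing R] {f : ι → MvPolynomial σ R} :
    LinearIndependent R (fun i m => coeff m (f i)) ↔ LinearIndependent R f :=
  (LinearMap.pi fun m => lcoeff R m).linearIndependent_iff_of_injOn
    (fun _ _ _ _ h => MvPolynomial.ext _ _ fun m => congrFun h m)

variable [Fintype ι] [DecidableEq ι]

theorem linearIndependent_map {K L : Type*} [Field K] [Field L] (φ : K →+* L)
    {f : ι → MvPolynomial σ K} (hf : LinearIndependent K f) :
    LinearIndependent L fun i => map φ (f i) := by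
  obtain ⟨m, hm⟩ := exists_det_ne_zero_of_linearIndependent (linearIndependent_coeff_iff.mpr hf)
  refine linearIndependent_coeff_iff.mp (linearIndependent_of_det_ne_zero m ?_)
  have hcoeff : (Matrix.of fun i j => coeff (m j) (map φ (f i))) =
      φ.mapMatrix (Matrix.of fun i j => coeff (m j) (f i)) := by
    ext i j
    simp [coeff_map]
  rw [hcoeff, ← RingHom.map_det]
  exact (map_ne_zero φ).mpr hm

theorem exists_det_eval_ne_zero {L : Type*} [Field L] [Infinite L] {g : ι → MvPolynomial σ L}
    (hg : LinearIndependent L g) :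
    ∃ β : ι → σ → L, (Matrix.of fun i j => eval (β j) (g i)).det ≠ 0 :=
  exists_det_ne_zero_of_linearIndependent <|
    (LinearMap.pi fun x => (aeval x).toLinearMap).linearIndependent_iff_of_injOn
      (fun _ _ _ _ h => MvPolynomial.funext fun x => congrFun h x) |>.mpr hg

theorem det_rename_ne_zero {F : Type*} [Field F] {f : ι → MvPolynomial σ F}
    (hf : LinearIndependent F f) :
    (Matrix.of fun i j => rename (Prod.mk j) (f i) :
      Matrix ι ι (MvPolynomial (ι × σ) F)).det ≠ 0 := by
  obtain ⟨β, hβ⟩ :=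
    exists_det_eval_ne_zero (linearIndependent_map (algebraMap F (AlgebraicClosure F)) hf)
  have hspec : (aeval fun q : ι × σ => β q.1 q.2).mapMatrix
      (Matrix.of fun i j => rename (Prod.mk j) (f i)) =
      Matrix.of fun i j => eval (β j) (map (algebraMap F (AlgebraicClosure F)) (f i)) := by
    ext i j
    rw [AlgHom.mapMatrix_apply, Matrix.map_apply, Matrix.of_apply, Matrix.of_apply, aeval_rename,
      eval_map, aeval_def]
    rfl
  exact fun hdet => hβ (by rw [← hspec, ← AlgHom.map_det, hdet, map_zero])

end MvPolynomial

theorem generic_polynomial_code_det_ne_zero_general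
    (F : Type*) [Field F] (k r : ℕ)
    (f : Fin k → MvPolynomial (Fin r) F) (hf : LinearIndependent F f) :
    (Matrix.of fun i j : Fin k => MvPolynomial.eval₂
      ((algebraMap (MvPolynomial (Fin k × Fin r) F)
        (FractionRing (MvPolynomial (Fin k × Fin r) F))).comp
        (MvPolynomial.C : F →+* MvPolynomial (Fin k × Fin r) F))
      (fun t => algebraMap (MvPolynomial (Fin k × Fin r) F)
        (FractionRing (MvPolynomial (Fin k × Fin r) F)) (MvPolynomial.X (j, t)))
      (f i)).det ≠ 0 := by
  set ψ :=
    algebraMap (MvPolynomial (Fin k × Fin r) F) (FractionRing (MvPolynomial (Fin k × Fin r) F))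
  have hgeneric : (Matrix.of fun i j : Fin k =>
      MvPolynomial.eval₂ (ψ.comp MvPolynomial.C) (fun t => ψ (MvPolynomial.X (j, t))) (f i)) =
      ψ.mapMatrix (Matrix.of fun i j => MvPolynomial.rename (Prod.mk j) (f i)) := by
    ext i j
    rw [RingHom.mapMatrix_apply, Matrix.map_apply, Matrix.of_apply, Matrix.of_apply,
      MvPolynomial.rename_eq_aeval, MvPolynomial.aeval_def, MvPolynomial.algebraMap_eq,
      MvPolynomial.eval₂_comp_left]
    rfl
  rw [hgeneric, ← RingHom.map_det]
  exact IsFractionRing.to_map_eq_zero_iff.not.mpr (MvPolynomial.det_rename_ne_zero hf)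

/-- A generic polynomial code with linearly independent defining polynomials is MDS:
the `k × k` evaluation matrix at generic points has nonzero determinant. -/
theorem generic_polynomial_code_det_ne_zero
    (F : Type*) [Field F] (k r : ℕ) (hk : 1 ≤ k) (hr : 1 ≤ r)
    (f : Fin k → MvPolynomial (Fin r) F) (hf : LinearIndependent F f) :
    (Matrix.of fun i j : Fin k => MvPolynomial.eval₂
      ((algebraMap (MvPolynomial (Fin k × Fin r) F)
        (FractionRing (MvPolynomial (Fin k × Fin r) F))).comp
        (MvPolynomial.C : F →+* MvPolynomial (Fin k × Fin r) F))
      (fun t => algebraMap (MvPolynomial (Fin k × Fin r) F)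
        (FractionRing (MvPolynomial (Fin k × Fin r) F)) (MvPolynomial.X (j, t)))
      (f i)).det ≠ 0 :=
  generic_polynomial_code_det_ne_zero_general F k r f hf
end
end

section
/- Let F be a field, let k ≥ 1, and let Z_1, …, Z_k be subsets of F^k such that for each i, Z_i is not contained in any hyperplane through the origin; that is, for every nonzero linear functional c : F^k → F (equivalently, every nonzero vector c ∈ F^k), there exists x ∈ Z_i with c_1 x_1 + ⋯ + c_k x_k ≠ 0. Then there exist points x_1 ∈ Z_1, …, x_k ∈ Z_k such that the k×k matrix whose columns are x_1, …, x_k has nonzero determinant. -/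
/-!
Choose the points greedily: fewer than `k` vectors span a proper subspace of `F^k`, while a set
not contained in any hyperplane through the origin spans `F^k`, so `Z_j` contains a point outside
the span of the points already chosen. The `k` points obtained are linearly independent.
-/

open Finset Matrix

noncomputable section

section

open Module Submodule

variable {K V : Type*} [DivisionRing K] [AddCommGroup V] [Module K V]

theorem Submodule.span_range_ne_top_of_card_lt {ι : Type*} [Fintype ι] (v : ι → V)
    (h : Fintype.card ι < finrank K V) : span K (Set.range v) ≠ ⊤ := by
  intro htop
  have := finrank_range_le_card (R := K) v
  rw [Set.finrank, htop, finrank_top] at this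
  omega

theorem Submodule.exists_mem_notMem_of_span_eq_top {Z : Set V} (hZ : span K Z = ⊤)
    {S : Submodule K V} (hS : S ≠ ⊤) : ∃ y ∈ Z, y ∉ S := by
  by_contra! h
  exact hS (eq_top_iff.2 (hZ ▸ span_le.2 h))

theorem exists_linearIndependent_of_span_eq_top {m : ℕ} (Z : Fin m → Set V)
    (hZ : ∀ i, span K (Z i) = ⊤) (hm : m ≤ finrank K V) :
    ∃ x : Fin m → V, (∀ i, x i ∈ Z i) ∧ LinearIndependent K x := by
  induction m with
  | zero => exact ⟨Fin.elim0, fun i => i.elim0, linearIndependent_empty_type⟩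
  | succ m ih =>
    obtain ⟨x, hxZ, hx⟩ := ih (fun i => Z i.castSucc) (fun i => hZ _) (by omega)
    obtain ⟨y, hyZ, hy⟩ := exists_mem_notMem_of_span_eq_top (hZ (Fin.last m))
      (span_range_ne_top_of_card_lt x (by simpa using hm))
    refine ⟨Fin.snoc x y, fun i => ?_, linearIndependent_finSnoc.2 ⟨hx, hy⟩⟩
    induction i using Fin.lastCases with
    | last => simpa using hyZ
    | cast i => simpa using hxZ i

end

open Submodule in
theorem span_eq_top_of_forall_dotProduct_ne_zero {K ι : Type*} [Field K] [Fintype ι]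
    [DecidableEq ι] {Z : Set (ι → K)} (hZ : ∀ c : ι → K, c ≠ 0 → ∃ x ∈ Z, c ⬝ᵥ x ≠ 0) :
    span K Z = ⊤ := by
  by_contra hne
  obtain ⟨f, hf, hZf⟩ := exists_le_ker_of_lt_top _ (lt_top_iff_ne_top.2 hne)
  obtain ⟨x, hx, hfx⟩ := hZ ((dotProductEquiv K ι).symm f)
    ((LinearEquiv.map_ne_zero_iff _).2 hf)
  apply hfx
  rw [← dotProductEquiv_apply_apply, LinearEquiv.apply_symm_apply]
  exact hZf (subset_span hx)

theorem exists_points_det_ne_zero_general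
    (F : Type*) [Field F] (k : ℕ)
    (Z : Fin k → Set (Fin k → F))
    (hZ : ∀ i, ∀ c : Fin k → F, c ≠ 0 → ∃ x ∈ Z i, (∑ t, c t * x t) ≠ 0) :
    ∃ x : Fin k → (Fin k → F), (∀ j, x j ∈ Z j) ∧
      (Matrix.of fun i j : Fin k => x j i).det ≠ 0 := by
  obtain ⟨x, hxZ, hx⟩ := exists_linearIndependent_of_span_eq_top Z
    (fun i => span_eq_top_of_forall_dotProduct_ne_zero (hZ i)) (by simp)
  refine ⟨x, hxZ, ?_⟩
  rw [← isUnit_iff_ne_zero, ← Matrix.isUnit_iff_isUnit_det,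
    ← Matrix.linearIndependent_cols_iff_isUnit]
  exact hx

/-- If each set `Z_i ⊆ F^k` is not contained in any hyperplane through the origin,
then one can pick a point from each `Z_i` so that the resulting `k × k` matrix of
columns has nonzero determinant. -/
theorem exists_points_det_ne_zero
    (F : Type*) [Field F] (k : ℕ) (hk : 1 ≤ k)
    (Z : Fin k → Set (Fin k → F))
    (hZ : ∀ i, ∀ c : Fin k → F, c ≠ 0 → ∃ x ∈ Z i, (∑ t, c t * x t) ≠ 0) :
    ∃ x : Fin k → (Fin k → F), (∀ j, x j ∈ Z j) ∧
      (Matrix.of fun i j : Fin k => x j i).det ≠ 0 :=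
  exists_points_det_ne_zero_general F k Z hZ
end
end

section
/- Let F be a field, let d, k ≥ 1, and let f_1, …, f_k ∈ F[[z_1,…,z_d]] (multivariate formal power series, MvPowerSeries (Fin d) F) be linearly independent over F. For each exponent multi-index m ∈ (Fin d →₀ ℕ) define the coefficient vector a(m) ∈ F^k by a(m)_i := the coefficient of z^m in f_i. Order the exponents by the lexicographic order on Fin d →₀ ℕ. Then there exist exponents m_1 <_lex m_2 <_lex ⋯ <_lex m_k such that the vectors a(m_1), …, a(m_k) are linearly independent over F, and moreover for every exponent m, the vector a(m) lies in the span of { a(m_β) : 1 ≤ β ≤ k, m_β ≤_lex m }. -/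
/-!
Call an index `i` of a family `v` indexed by a linear order a pivot if `v i` is not in the span
of the earlier vectors. The pivots index a linearly independent subfamily, and when the order is
well-founded every `v i` lies in the span of the pivot vectors `v j` with `j ≤ i`.
The coefficient vectors `a(m)` span `F^k` because a linear form vanishing on all of them is a
linear relation among the `f_i`; since the lexicographic order on exponents is a well-order, the
pivots of `m ↦ a(m)` are `k` exponents `m_1 <_lex ⋯ <_lex m_k` with the required properties.
-/

open Finset Matrix

noncomputable section

open Submodule Set Module

theorem span_range_swap_eq_top_of_linearIndependent {ι α K : Type*} [Field K] [Fintype ι]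
    {f : ι → α → K} (hf : LinearIndependent K f) :
    span K (range (Function.swap f)) = ⊤ := by
  classical
  rw [← dualAnnihilator_eq_bot_iff, eq_bot_iff]
  intro φ hφ
  have hrel : ∑ i, φ (fun j => if i = j then 1 else 0) • f i = 0 := by
    funext x
    have := (mem_dualAnnihilator _).1 hφ _ (subset_span ⟨x, rfl⟩)
    rw [LinearMap.pi_apply_eq_sum_univ] at this
    simpa [mul_comm] using this
  have hc := Fintype.linearIndependent_iff.1 hf _ hrel
  rw [mem_bot]
  refine LinearMap.ext fun w => ?_
  simp [LinearMap.pi_apply_eq_sum_univ φ w, hc]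

section Pivots

variable {K V ι : Type*} [Field K] [AddCommGroup V] [Module K V] [LinearOrder ι] {v : ι → V}

theorem linearIndepOn_of_notMem_span_image_Iio {s : Set ι}
    (h : ∀ i ∈ s, v i ∉ span K (v '' (s ∩ Iio i))) : LinearIndepOn K v s := by
  refine linearIndepOn_of_finite s fun t hts ht => ?_
  classical
  lift t to Finset ι using ht
  induction t using Finset.induction_on_max with
  | empty => simp
  | insert a t hlt ih =>
    have hat : a ∉ t := fun ha => (hlt a ha).false
    rw [Finset.coe_insert] at hts ⊢
    rw [linearIndepOn_insert (by exact_mod_cast hat)]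
    refine ⟨ih ((subset_insert _ _).trans hts), fun hmem => h a (hts (mem_insert _ _)) ?_⟩
    have hts' : (t : Set ι) ⊆ s ∩ Iio a := fun x hx =>
      ⟨hts (mem_insert_of_mem _ hx), hlt x hx⟩
    exact span_mono (image_mono hts') hmem

variable (K v) in
def pivots : Set ι := {i | v i ∉ span K (v '' Iio i)}

theorem linearIndepOn_pivots : LinearIndepOn K v (pivots K v) :=
  linearIndepOn_of_notMem_span_image_Iio fun _ hi hmem =>
    hi (span_mono (image_mono inter_subset_right) hmem)

theorem mem_span_image_pivots_inter_Iic [WellFoundedLT ι] (i : ι) :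
    v i ∈ span K (v '' (pivots K v ∩ Iic i)) := by
  induction i using WellFoundedLT.induction with
  | _ i ih =>
    by_cases hi : i ∈ pivots K v
    · exact subset_span ⟨i, ⟨hi, le_rfl⟩, rfl⟩
    · refine span_le.2 ?_ (not_not.1 hi)
      rintro _ ⟨j, hj, rfl⟩
      have hji : pivots K v ∩ Iic j ⊆ pivots K v ∩ Iic i :=
        inter_subset_inter_right _ (Set.Iic_subset_Iic.2 hj.le)
      exact span_mono (image_mono hji) (ih j hj)

theorem span_image_pivots [WellFoundedLT ι] :
    span K (v '' pivots K v) = span K (range v) := by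
  refine le_antisymm (span_mono (image_subset_range _ _)) (span_le.2 ?_)
  rintro _ ⟨i, rfl⟩
  exact span_mono (image_mono inter_subset_left) (mem_span_image_pivots_inter_Iic i)

theorem exists_strictMono_linearIndependent_forall_mem_span [WellFoundedLT ι]
    [FiniteDimensional K V] {n : ℕ} (hn : finrank K V = n) (hv : span K (range v) = ⊤) :
    ∃ m : Fin n → ι, StrictMono m ∧ LinearIndependent K (v ∘ m) ∧
      ∀ i, v i ∈ span K ((v ∘ m) '' {β | m β ≤ i}) := by
  have hli : LinearIndepOn K v (pivots K v) := linearIndepOn_pivots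
  have hfin : (pivots K v).Finite := Set.finite_coe_iff.1 hli.finite
  have hcard : hfin.toFinset.card = n := by
    have := hfin.fintype
    let b := Basis.mk hli (by rw [← image_eq_range, span_image_pivots, hv])
    rw [Set.Finite.card_toFinset, ← hn, finrank_eq_card_basis b]
  set e := hfin.toFinset.orderEmbOfFin hcard
  have hrange : range e = pivots K v := by
    rw [Finset.range_orderEmbOfFin, Set.Finite.coe_toFinset]
  refine ⟨e, e.strictMono, hli.comp (fun β => ⟨e β, hrange ▸ mem_range_self β⟩)
    fun _ _ h => e.injective (congrArg Subtype.val h :), fun i => ?_⟩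
  change v i ∈ span K ((v ∘ e) '' (e ⁻¹' Iic i))
  rw [image_comp, image_preimage_eq_range_inter, hrange]
  exact mem_span_image_pivots_inter_Iic i

end Pivots

theorem power_series_leading_coefficients_general
    (F : Type*) [Field F] (d k : ℕ)
    (f : Fin k → MvPowerSeries (Fin d) F) (hf : LinearIndependent F f) :
    ∃ m : Fin k → (Fin d →₀ ℕ),
      StrictMono (fun β => toLex (m β)) ∧
      LinearIndependent F (fun β => fun i => MvPowerSeries.coeff (m β) (f i)) ∧
      ∀ m' : Fin d →₀ ℕ,
        (fun i => MvPowerSeries.coeff m' (f i)) ∈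
          Submodule.span F
            ((fun β => fun i => MvPowerSeries.coeff (m β) (f i)) ''
              {β : Fin k | toLex (m β) ≤ toLex m'}) := by
  let v : Lex (Fin d →₀ ℕ) → Fin k → F := fun x i => MvPowerSeries.coeff (ofLex x) (f i)
  have hv : span F (range v) = ⊤ := by
    rw [← span_range_swap_eq_top_of_linearIndependent hf]
    exact congrArg _ (ofLex.surjective.range_comp fun x i => MvPowerSeries.coeff x (f i))
  obtain ⟨m, hm, hli, hspan⟩ :=
    exists_strictMono_linearIndependent_forall_mem_span (finrank_fin_fun F) hv
  exact ⟨fun β => ofLex (m β), hm, hli, fun m' => hspan (toLex m')⟩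

/-- Leading-coefficient structure of linearly independent power series: there are
lexicographically increasing exponents `m_1 < ⋯ < m_k` whose coefficient vectors are
linearly independent, and every coefficient vector lies in the span of those coefficient
vectors with lexicographically smaller or equal exponent. -/
theorem power_series_leading_coefficients
    (F : Type*) [Field F] (d k : ℕ) (hd : 1 ≤ d) (hk : 1 ≤ k)
    (f : Fin k → MvPowerSeries (Fin d) F) (hf : LinearIndependent F f) :
    ∃ m : Fin k → (Fin d →₀ ℕ),
      StrictMono (fun β => toLex (m β)) ∧
      LinearIndependent F (fun β => fun i => MvPowerSeries.coeff (m β) (f i)) ∧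
      ∀ m' : Fin d →₀ ℕ,
        (fun i => MvPowerSeries.coeff m' (f i)) ∈
          Submodule.span F
            ((fun β => fun i => MvPowerSeries.coeff (m β) (f i)) ''
              {β : Fin k | toLex (m β) ≤ toLex m'}) :=
  power_series_leading_coefficients_general F d k f hf
end
end
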